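/- arXiv:1706.01870 — 8 statements merged into one kernel-verified Lean document; each statement's English description precedes it below -/
import Mathlib

section
/- Let $V$ be a vector space over a field $K$, let $v_1,\dots,v_r \in V$, and let $a_1,\dots,a_r \in K$ all be nonzero. If $\sum_{i=1}^r a_i\,(v_i \otimes v_i) = 0$ in $V \otimes_K V$, then the linear span of $\{v_1,\dots,v_r\}$ has dimension at most $\lfloor r/2 \rfloor$. -/
/-!
Choose an independent subfamily `(vᵢ)_{i ∈ s}` spanning the span of all the `vᵢ`, so that this
span has dimension `|s|`. For `j ∈ s` take a linear form `f` vanishing on `vᵢ` for `i ∈ s \ {j}`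
but not on `vⱼ`; applying `f ⊗ id` to the relation gives `∑ aᵢ f(vᵢ) vᵢ = 0`, which expresses
`vⱼ` through the `vᵢ` with `i ∉ s`. Hence the span also has dimension at most `r - |s|`, and
`|s| ≤ r - |s|`.
-/

open TensorProduct Submodule

section
variable {R K V ι : Type*} [Fintype ι] {v : ι → V}

theorem sum_mul_apply_smul_eq_zero_of_sum_smul_tmul_self_eq_zero [CommSemiring R]
    [AddCommMonoid V] [Module R V] {a : ι → R} (h : ∑ i, a i • (v i ⊗ₜ[R] v i) = 0)
    (f : Module.Dual R V) : ∑ i, (a i * f (v i)) • v i = 0 := by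
  simpa [mul_smul] using congrArg ((TensorProduct.lid R V).toLinearMap ∘ₗ f.rTensor V) h

variable [Field K] [AddCommGroup V] [Module K V] {a : ι → K}

theorem mem_span_image_compl_of_sum_smul_tmul_self_eq_zero (ha : ∀ i, a i ≠ 0)
    (h : ∑ i, a i • (v i ⊗ₜ[K] v i) = 0) {s : Set ι} (hs : LinearIndepOn K v s) {j : ι}
    (hj : j ∈ s) : v j ∈ span K (v '' sᶜ) := by
  classical
  obtain ⟨f, hfj, hf⟩ := exists_dual_map_eq_bot_of_notMem (hs.notMem_span hj) inferInstance
  have hrel := sum_mul_apply_smul_eq_zero_of_sum_smul_tmul_self_eq_zero h f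
  rw [← Finset.add_sum_erase _ _ (Finset.mem_univ j), add_eq_zero_iff_eq_neg] at hrel
  rw [← smul_mem_iff _ (mul_ne_zero (ha j) hfj), hrel]
  refine neg_mem (sum_mem fun i hi => ?_)
  by_cases his : i ∈ s
  · have hfi : f (v i) = 0 := by
      refine LinearMap.mem_ker.1 (LinearMap.le_ker_iff_map.2 hf (subset_span ⟨i, ⟨his, ?_⟩, rfl⟩))
      simpa using Finset.ne_of_mem_erase hi
    simp [hfi]
  · exact smul_mem _ _ (subset_span ⟨i, his, rfl⟩)

theorem span_range_le_span_image_compl_of_sum_smul_tmul_self_eq_zero (ha : ∀ i, a i ≠ 0)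
    (h : ∑ i, a i • (v i ⊗ₜ[K] v i) = 0) {s : Set ι} (hs : LinearIndepOn K v s) :
    span K (Set.range v) ≤ span K (v '' sᶜ) := by
  refine span_le.2 <| Set.range_subset_iff.2 fun i => ?_
  by_cases hi : i ∈ s
  · exact mem_span_image_compl_of_sum_smul_tmul_self_eq_zero ha h hs hi
  · exact subset_span ⟨i, hi, rfl⟩

end

/-- Igusa's lemma: if `∑ aᵢ • (vᵢ ⊗ vᵢ) = 0` with all `aᵢ ≠ 0`, then the span of the `vᵢ`
has dimension at most `⌊r/2⌋`. -/
theorem igusa_lemma {K V : Type*} [Field K] [AddCommGroup V] [Module K V]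
    (r : ℕ) (v : Fin r → V) (a : Fin r → K) (ha : ∀ i, a i ≠ 0)
    (h : ∑ i, a i • (v i ⊗ₜ[K] v i) = (0 : V ⊗[K] V)) :
    Module.finrank K ↥(Submodule.span K (Set.range v)) ≤ r / 2 := by
  classical
  obtain ⟨s, -, -, hspan, hs⟩ :=
    exists_linearIndepOn_extension (linearIndepOn_empty K v) (Set.subset_univ _)
  have hrank : Module.finrank K (span K (Set.range v)) = Fintype.card s := by
    rw [← Set.image_univ, (span_le.2 hspan).antisymm (span_mono (Set.image_mono s.subset_univ)),
      Set.image_eq_range, finrank_span_eq_card hs]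
  have hle : Module.finrank K (span K (Set.range v)) ≤ Fintype.card ↥sᶜ := by
    have hsc := span_range_le_span_image_compl_of_sum_smul_tmul_self_eq_zero ha h hs
    rw [Set.image_eq_range] at hsc
    have := FiniteDimensional.span_of_finite K (Set.finite_range fun i : ↥sᶜ => v i)
    exact (finrank_mono hsc).trans (finrank_range_le_card _)
  have hcard : Fintype.card s + Fintype.card ↥sᶜ = r := by
    have hs_le : Fintype.card s ≤ r := (Fintype.card_subtype_le _).trans_eq (Fintype.card_fin r)
    rw [Fintype.card_compl_set, Fintype.card_fin]
    omega
  omega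
end

section
/- Let $V$ be a vector space over a field $K$, let $w, v_2, \dots, v_r \in V$, and let $\beta_2,\dots,\beta_r \in K$ all be nonzero. If $w \otimes w = \sum_{k=2}^{r} \beta_k\,(v_k \otimes v_k)$ in $V \otimes_K V$, then the linear span of $\{w, v_2, \dots, v_r\}$ has dimension at most $\lfloor r/2 \rfloor$. -/
/-!
Rewrite the hypothesis as `∑ᵢ cᵢ xᵢ ⊗ xᵢ = 0` with all `cᵢ ≠ 0`, where the `xᵢ` are `w, v₂, …, v_r`.
Contracting with functionals gives `A D Aᵀ = 0`, where `A : Kⁿ → V` sends the standard basis to the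
`xᵢ` and `D = diag(cᵢ)`. So `range (D Aᵀ) ⊆ ker A`; as `D` is invertible and `Aᵀ` has the rank of
`A`, rank–nullity gives `2 · rank A ≤ n`, and `rank A` is the dimension of the span of the `xᵢ`.
-/

open TensorProduct Module Submodule

namespace LinearMap

theorem two_mul_finrank_range_le_of_comp_dualMap_eq_zero {K U V : Type*} [Field K]
    [AddCommGroup U] [Module K U] [FiniteDimensional K U] [AddCommGroup V] [Module K V]
    (A : U →ₗ[K] V) (φ : Dual K U ≃ₗ[K] U) (h : A ∘ₗ φ.toLinearMap ∘ₗ A.dualMap = 0) :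
    2 * finrank K (range A) ≤ finrank K U := by
  have hle : range (φ.toLinearMap ∘ₗ A.dualMap) ≤ ker A := by
    rintro _ ⟨f, rfl⟩
    exact LinearMap.congr_fun h f
  have hrank : finrank K (range (φ.toLinearMap ∘ₗ A.dualMap)) = finrank K (range A) := by
    rw [range_comp, LinearEquiv.finrank_map_eq, finrank_range_dualMap_eq_finrank_range]
  have := Submodule.finrank_mono hle
  have := A.finrank_range_add_finrank_ker
  omega

end LinearMap

section

variable {K V ι : Type*} [Field K] [AddCommGroup V] [Module K V] [Fintype ι]

theorem sum_mul_apply_smul_eq_zero_of_sum_smul_tmul_self_eq_zero_s1 {x : ι → V} {c : ι → K}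
    (h : ∑ i, c i • (x i ⊗ₜ[K] x i) = 0) (f : Dual K V) :
    ∑ i, (c i * f (x i)) • x i = 0 := by
  simpa [mul_smul] using congrArg (TensorProduct.lift ((LinearMap.lsmul K V).comp f)) h

theorem two_mul_finrank_span_range_le_card_of_sum_smul_tmul_self_eq_zero {x : ι → V} {c : ι → K}
    (hc : ∀ i, c i ≠ 0) (h : ∑ i, c i • (x i ⊗ₜ[K] x i) = 0) :
    2 * finrank K (span K (Set.range x)) ≤ Fintype.card ι := by
  classical
  let D : Dual K (ι → K) ≃ₗ[K] (ι → K) := (Pi.basisFun K ι).dualBasis.equivFun.trans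
    (LinearEquiv.piCongrRight fun i => LinearEquiv.smulOfNeZero K K (c i) (hc i))
  have hA : Fintype.linearCombination K x ∘ₗ D.toLinearMap ∘ₗ
      (Fintype.linearCombination K x).dualMap = 0 := by
    ext f
    simpa [D, Fintype.linearCombination_apply, Fintype.linearCombination_apply_single]
      using sum_mul_apply_smul_eq_zero_of_sum_smul_tmul_self_eq_zero_s1 h f
  have hbound := LinearMap.two_mul_finrank_range_le_of_comp_dualMap_eq_zero _ D hA
  rwa [Fintype.range_linearCombination, finrank_fintype_fun_eq_card] at hbound

end

/-- Rank-one decomposition step: if `w ⊗ w = ∑_{k=2}^r βₖ • (vₖ ⊗ vₖ)` with all `βₖ ≠ 0`,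
then the span of `{w, v₂, …, v_r}` has dimension at most `⌊r/2⌋`. -/
theorem span_le_of_tensor_sq_eq_sum {K V : Type*} [Field K] [AddCommGroup V] [Module K V]
    (r : ℕ) (w : V) (v : ℕ → V) (β : ℕ → K)
    (hβ : ∀ k ∈ Finset.Icc 2 r, β k ≠ 0)
    (h : w ⊗ₜ[K] w = ∑ k ∈ Finset.Icc 2 r, β k • (v k ⊗ₜ[K] v k)) :
    Module.finrank K ↥(Submodule.span K (insert w (v '' ↑(Finset.Icc 2 r)))) ≤ r / 2 := by
  let x : Option (Finset.Icc 2 r) → V := fun o => o.elim w fun k => v k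
  let c : Option (Finset.Icc 2 r) → K := fun o => o.elim (-1) fun k => β k
  have hc : ∀ o, c o ≠ 0 := by
    rintro (_ | ⟨k, hk⟩)
    · simp [c]
    · exact hβ k hk
  have hrel : ∑ o, c o • (x o ⊗ₜ[K] x o) = 0 := by
    rw [Fintype.sum_option]
    change (-1 : K) • (w ⊗ₜ[K] w) + ∑ k : Finset.Icc 2 r, β k • (v k ⊗ₜ[K] v k) = 0
    rw [Finset.sum_coe_sort (Finset.Icc 2 r) fun k => β k • (v k ⊗ₜ[K] v k), ← h, neg_one_smul,
      neg_add_cancel]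
  have hrange : Set.range x = insert w (v '' ↑(Finset.Icc 2 r)) := by
    rw [Option.range_elim, Set.image_eq_range]
    rfl
  have hbound := two_mul_finrank_span_range_le_card_of_sum_smul_tmul_self_eq_zero hc hrel
  rw [hrange, Fintype.card_option, Fintype.card_coe, Nat.card_Icc] at hbound
  omega
end

section
/- Let $V$ be a vector space over a field $K$, let $v_1, v_2, v_3 \in V$, and let $\beta_2, \beta_3 \in K$ be nonzero. If $v_1 \otimes v_1 = \beta_2\,(v_2 \otimes v_2) + \beta_3\,(v_3 \otimes v_3)$ in $V \otimes_K V$, then the span of $\{v_1, v_2, v_3\}$ has dimension at most $1$; in particular the three vectors are pairwise linearly dependent. -/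
/-!
Contracting the first tensor factor against a functional `f` turns the identity into
`f v₁ • v₁ = (β₂ * f v₂) • v₂ + (β₃ * f v₃) • v₃`. If one of `v₂, v₃` is a multiple of the
other, `v₁ ⊗ v₁` is a pure tensor `u ⊗ w` with `w` spanning their line, and contracting against
a functional that does not vanish on `v₁` puts `v₁` on that line. Otherwise a functional killing
`v₃` but not `v₂` leaves `f v₁ • v₁ = (β₂ * f v₂) • v₂` with a nonzero coefficient on the right,
so `v₂ ∈ K ∙ v₁`, and symmetrically `v₃ ∈ K ∙ v₁`.
-/

open TensorProduct Module Submodule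

section

variable {K M N : Type*} [Field K] [AddCommGroup M] [Module K M] [AddCommGroup N] [Module K N]

def contractFirst (f : Dual K M) : M ⊗[K] N →ₗ[K] N :=
  (TensorProduct.lid K N).toLinearMap ∘ₗ f.rTensor N

@[simp]
theorem contractFirst_tmul (f : Dual K M) (x : M) (y : N) :
    contractFirst f (x ⊗ₜ[K] y) = f x • y := by
  simp [contractFirst]

theorem mem_span_singleton_of_tmul_eq_tmul {x u : M} {y w : N} (hx : x ≠ 0)
    (h : x ⊗ₜ[K] y = u ⊗ₜ[K] w) : y ∈ K ∙ w := by
  obtain ⟨f, hf⟩ := Projective.exists_dual_eq_one K hx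
  have hy := congrArg (contractFirst f) h
  rw [contractFirst_tmul, contractFirst_tmul, hf, one_smul] at hy
  exact mem_span_singleton.mpr ⟨f u, hy.symm⟩

theorem mem_span_singleton_of_tmul_self_eq_tmul {x u w : M} (h : x ⊗ₜ[K] x = u ⊗ₜ[K] w) :
    x ∈ K ∙ w := by
  rcases eq_or_ne x 0 with rfl | hx
  · exact zero_mem _
  · exact mem_span_singleton_of_tmul_eq_tmul hx h

end

section

variable {K V : Type*} [Field K] [AddCommGroup V] [Module K V]

theorem finrank_span_singleton_le_one (w : V) : finrank K (K ∙ w) ≤ 1 :=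
  (finrank_span_le_card {w}).trans (by simp)

theorem not_linearIndependent_pair_of_mem_span_singleton {x y w : V} (hx : x ∈ K ∙ w)
    (hy : y ∈ K ∙ w) : ¬ LinearIndependent K ![x, y] := by
  intro hxy
  have hle : span K (Set.range ![x, y]) ≤ K ∙ w := by
    rw [Matrix.range_cons_cons_empty, span_le]
    exact Set.pair_subset hx hy
  have h2 := linearIndependent_iff_card_eq_finrank_span.mp hxy
  have := (finrank_mono hle).trans (finrank_span_singleton_le_one w)
  simp only [Fintype.card_fin, Set.finrank] at h2
  omega

variable {x y z : V} {β₂ β₃ : K}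

theorem mem_span_singleton_of_tmul_self_eq_add (hβ₂ : β₂ ≠ 0) (hyz : y ∉ K ∙ z)
    (h : x ⊗ₜ[K] x = β₂ • (y ⊗ₜ[K] y) + β₃ • (z ⊗ₜ[K] z)) : y ∈ K ∙ x := by
  obtain ⟨f, hfy, hmap⟩ := exists_dual_map_eq_bot_of_notMem hyz inferInstance
  have hfz : f z = 0 := by
    simpa [map_span, Set.image_singleton] using hmap
  have hx : f x • x = (β₂ * f y) • y := by
    simpa [hfz, smul_smul] using congrArg (contractFirst f) h
  exact mem_span_singleton.mpr ⟨(β₂ * f y)⁻¹ * f x, by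
    rw [mul_smul, hx, smul_smul, inv_mul_cancel₀ (mul_ne_zero hβ₂ hfy), one_smul]⟩

theorem span_triple_le_span_singleton_of_mem (hzy : z ∈ K ∙ y)
    (h : x ⊗ₜ[K] x = β₂ • (y ⊗ₜ[K] y) + β₃ • (z ⊗ₜ[K] z)) :
    span K {x, y, z} ≤ K ∙ y := by
  obtain ⟨c, rfl⟩ := mem_span_singleton.mp hzy
  have hx : x ⊗ₜ[K] x = ((β₂ + β₃ * c ^ 2) • y) ⊗ₜ[K] y := by
    rw [h, smul_tmul_smul, smul_smul, ← add_smul, smul_tmul']; ring_nf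
  rw [span_le]
  rintro v (rfl | rfl | rfl)
  · exact mem_span_singleton_of_tmul_self_eq_tmul hx
  · exact mem_span_singleton_self v
  · exact hzy

theorem exists_span_triple_le_span_singleton (hβ₂ : β₂ ≠ 0) (hβ₃ : β₃ ≠ 0)
    (h : x ⊗ₜ[K] x = β₂ • (y ⊗ₜ[K] y) + β₃ • (z ⊗ₜ[K] z)) :
    ∃ w, span K {x, y, z} ≤ K ∙ w := by
  have h' : x ⊗ₜ[K] x = β₃ • (z ⊗ₜ[K] z) + β₂ • (y ⊗ₜ[K] y) := h.trans (add_comm _ _)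
  by_cases hzy : z ∈ K ∙ y
  · exact ⟨y, span_triple_le_span_singleton_of_mem hzy h⟩
  by_cases hyz : y ∈ K ∙ z
  · refine ⟨z, ?_⟩
    rw [Set.pair_comm y z]
    exact span_triple_le_span_singleton_of_mem hyz h'
  refine ⟨x, span_le.mpr ?_⟩
  rintro v (rfl | rfl | rfl)
  · exact mem_span_singleton_self v
  · exact mem_span_singleton_of_tmul_self_eq_add hβ₂ hyz h
  · exact mem_span_singleton_of_tmul_self_eq_add hβ₃ hzy h'

end

/-- Trisecant case of the rank-one decomposition lemma: if
`v₁ ⊗ v₁ = β₂ • (v₂ ⊗ v₂) + β₃ • (v₃ ⊗ v₃)` with `β₂, β₃ ≠ 0`, then the span of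
`{v₁, v₂, v₃}` has dimension at most `1`, and the three vectors are pairwise
linearly dependent. -/
theorem span_le_one_of_tensor_trisecant {K V : Type*} [Field K] [AddCommGroup V] [Module K V]
    (v₁ v₂ v₃ : V) (β₂ β₃ : K) (hβ₂ : β₂ ≠ 0) (hβ₃ : β₃ ≠ 0)
    (h : v₁ ⊗ₜ[K] v₁ = β₂ • (v₂ ⊗ₜ[K] v₂) + β₃ • (v₃ ⊗ₜ[K] v₃)) :
    Module.finrank K ↥(Submodule.span K ({v₁, v₂, v₃} : Set V)) ≤ 1 ∧
      ∀ x ∈ ({v₁, v₂, v₃} : Set V), ∀ y ∈ ({v₁, v₂, v₃} : Set V),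
        ¬ LinearIndependent K ![x, y] := by
  obtain ⟨w, hw⟩ := exists_span_triple_le_span_singleton hβ₂ hβ₃ h
  refine ⟨(finrank_mono hw).trans (finrank_span_singleton_le_one w), fun x hx y hy => ?_⟩
  exact not_linearIndependent_pair_of_mem_span_singleton (hw (subset_span hx))
    (hw (subset_span hy))
end

section
/- Let $V$ be a vector space over a field $K$, let $v_1, v_2, v_3, v_4 \in V$, and let $\beta_2, \beta_3, \beta_4 \in K$ be nonzero. If $v_1 \otimes v_1 = \beta_2\,(v_2 \otimes v_2) + \beta_3\,(v_3 \otimes v_3) + \beta_4\,(v_4 \otimes v_4)$ in $V \otimes_K V$, then the span of $\{v_1, v_2, v_3, v_4\}$ has dimension at most $2$. -/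
/-!
Pairing both sides of `v ⊗ v = ∑ βᵢ • wᵢ ⊗ wᵢ` with `f ⊗ g` for linear forms `f, g` gives
`f v * g v = ∑ βᵢ f(wᵢ) g(wᵢ)`. A form vanishing on all `wᵢ` must vanish on `v`, so `v` lies in the
span of the `wᵢ`. If the `wᵢ` were independent, the coordinate forms `fᵢ, fⱼ` would give
`fᵢ(v)² = βᵢ`, `fⱼ(v)² = βⱼ` and `fᵢ(v) fⱼ(v) = 0`, so `βᵢ βⱼ = 0`. Hence two nonzero coefficients
force `v₂, v₃, v₄` to be dependent, and `v₁` adds nothing to their span.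
-/

open TensorProduct

theorem apply_mul_apply_eq_sum_of_tmul_self_eq_sum {R M ι : Type*} [CommRing R] [AddCommGroup M]
    [Module R M] [Fintype ι] {v : M} {w : ι → M} {β : ι → R}
    (h : v ⊗ₜ[R] v = ∑ i, β i • (w i ⊗ₜ[R] w i)) (f g : Module.Dual R M) :
    f v * g v = ∑ i, β i * (f (w i) * g (w i)) := by
  simpa [map_sum, mul_assoc] using
    congrArg ((TensorProduct.lid R R).toLinearMap ∘ₗ TensorProduct.map f g) h

section

variable {K V ι : Type*} [Field K] [AddCommGroup V] [Module K V] {v : V} {w : ι → V} {β : ι → K}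

theorem LinearIndependent.exists_dual_apply_eq_single (hw : LinearIndependent K w) :
    ∃ f : ι → Module.Dual K V, ∀ i j, f i (w j) = Finsupp.single j 1 i := by
  obtain ⟨g, hg⟩ := (Finsupp.linearCombination K w).exists_leftInverse_of_injective
    (LinearMap.ker_eq_bot.mpr hw)
  refine ⟨fun i ↦ Finsupp.lapply i ∘ₗ g, fun i j ↦ ?_⟩
  simpa using congrArg (fun φ : (ι →₀ K) →ₗ[K] ι →₀ K ↦ φ (Finsupp.single j 1) i) hg

theorem mem_span_range_of_tmul_self_eq_sum [Fintype ι]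
    (h : v ⊗ₜ[K] v = ∑ i, β i • (w i ⊗ₜ[K] w i)) :
    v ∈ Submodule.span K (Set.range w) := by
  by_contra hv
  obtain ⟨f, hfv, hf⟩ := Submodule.exists_dual_map_eq_bot_of_notMem hv inferInstance
  have hfw (i : ι) : f (w i) = 0 := by
    simpa [hf] using
      Submodule.mem_map_of_mem (f := f) (Submodule.mem_span_of_mem (Set.mem_range_self (f := w) i))
  have hff := apply_mul_apply_eq_sum_of_tmul_self_eq_sum h f f
  simp only [hfw, mul_zero, Finset.sum_const_zero] at hff
  exact hfv (mul_self_eq_zero.mp hff)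

theorem LinearIndependent.mul_eq_zero_of_tmul_self_eq_sum [Fintype ι] (hw : LinearIndependent K w)
    (h : v ⊗ₜ[K] v = ∑ i, β i • (w i ⊗ₜ[K] w i)) {i j : ι} (hij : i ≠ j) :
    β i * β j = 0 := by
  classical
  obtain ⟨f, hf⟩ := hw.exists_dual_apply_eq_single
  have pair := apply_mul_apply_eq_sum_of_tmul_self_eq_sum h
  have hii : f i v * f i v = β i := by simpa [hf, Finsupp.single_apply] using pair (f i) (f i)
  have hjj : f j v * f j v = β j := by simpa [hf, Finsupp.single_apply] using pair (f j) (f j)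
  have hij' : f i v * f j v = 0 := by
    simpa [hf, Finsupp.single_apply, hij.symm] using pair (f i) (f j)
  calc β i * β j = (f i v * f j v) * (f i v * f j v) := by rw [← hii, ← hjj]; ring
    _ = 0 := by rw [hij', zero_mul]

end

theorem span_le_two_of_tensor_quadrisecant_general {K V : Type*} [Field K] [AddCommGroup V] [Module K V]
    (v₁ v₂ v₃ v₄ : V) (β₂ β₃ β₄ : K) (hβ₂ : β₂ ≠ 0) (hβ₃ : β₃ ≠ 0)
    (h : v₁ ⊗ₜ[K] v₁ =
        β₂ • (v₂ ⊗ₜ[K] v₂) + β₃ • (v₃ ⊗ₜ[K] v₃) + β₄ • (v₄ ⊗ₜ[K] v₄)) :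
    Module.finrank K ↥(Submodule.span K ({v₁, v₂, v₃, v₄} : Set V)) ≤ 2 := by
  set w := ![v₂, v₃, v₄]
  have hsum : v₁ ⊗ₜ[K] v₁ = ∑ i, ![β₂, β₃, β₄] i • (w i ⊗ₜ[K] w i) := by
    simpa [w, Fin.sum_univ_three, add_assoc] using h
  have hw : ¬ LinearIndependent K w := fun hli ↦
    mul_ne_zero hβ₂ hβ₃ (hli.mul_eq_zero_of_tmul_self_eq_sum hsum (by decide : (0 : Fin 3) ≠ 1))
  have hrange : Set.range w = {v₂, v₃, v₄} := by
    rw [Matrix.range_cons, Matrix.range_cons_cons_empty, Set.singleton_union]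
  rw [linearIndependent_iff_card_le_finrank_span, not_le, Fintype.card_fin, hrange] at hw
  have hv₁ : v₁ ∈ Submodule.span K {v₂, v₃, v₄} :=
    hrange ▸ mem_span_range_of_tmul_self_eq_sum hsum
  rw [Submodule.span_insert_eq_span hv₁]
  exact Nat.le_of_lt_succ hw

/-- Quadrisecant case of the rank-one decomposition lemma: if
`v₁ ⊗ v₁ = β₂ • (v₂ ⊗ v₂) + β₃ • (v₃ ⊗ v₃) + β₄ • (v₄ ⊗ v₄)` with `β₂, β₃, β₄ ≠ 0`,
then the span of `{v₁, v₂, v₃, v₄}` has dimension at most `2`. -/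
theorem span_le_two_of_tensor_quadrisecant {K V : Type*} [Field K] [AddCommGroup V] [Module K V]
    (v₁ v₂ v₃ v₄ : V) (β₂ β₃ β₄ : K) (hβ₂ : β₂ ≠ 0) (hβ₃ : β₃ ≠ 0) (hβ₄ : β₄ ≠ 0)
    (h : v₁ ⊗ₜ[K] v₁ =
        β₂ • (v₂ ⊗ₜ[K] v₂) + β₃ • (v₃ ⊗ₜ[K] v₃) + β₄ • (v₄ ⊗ₜ[K] v₄)) :
    Module.finrank K ↥(Submodule.span K ({v₁, v₂, v₃, v₄} : Set V)) ≤ 2 :=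
  span_le_two_of_tensor_quadrisecant_general v₁ v₂ v₃ v₄ β₂ β₃ β₄ hβ₂ hβ₃ h
end

section
/- Let $g \geq 1$, let $f : \mathbb{C}^g \to \mathbb{C}$ be twice continuously $\mathbb{C}$-differentiable and even, let $x_1, \dots, x_r \in \mathbb{C}^g$ satisfy $f(x_k) = 0$ for all $k = 1, \dots, r$, and let $\beta_2, \dots, \beta_r \in \mathbb{C}$ be such that for all $z \in \mathbb{C}^g$ one has $f(z-x_1) f(z+x_1) = \sum_{k=2}^{r} \beta_k\, f(z-x_k) f(z+x_k)$. Then for all $u, v \in \mathbb{C}^g$: $(Df(x_1)(u))(Df(x_1)(v)) = \sum_{k=2}^{r} \beta_k\,(Df(x_k)(u))(Df(x_k)(v))$. -/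
/-!
Restrict the relation to a line `z = t • w`. Since `f` is even and vanishes at `x`, the factors
`f (t • w ∓ x) = f (x ∓ t • w)` are `∓ t • Df(x)(w) + o(t)`, so `f (t • w - x) * f (t • w + x)`
is `-t² (Df(x)(w))² + o(t²)`. Dividing the relation by `t²` and letting `t → 0` gives the
relation for the quadratic forms `(Df(x_k)(w))²`, and polarization gives the bilinear one.
-/

open Filter Topology

section Polarization

variable {ι 𝕜 E F : Type*} [Field 𝕜] [NeZero (2 : 𝕜)] [AddCommGroup E]
  [FunLike F E 𝕜] [AddMonoidHomClass F E 𝕜]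

theorem mul_eq_sum_of_forall_sq_eq_sum {s : Finset ι} {c : ι → 𝕜} {L₀ : F} {L : ι → F}
    (h : ∀ w, L₀ w ^ 2 = ∑ i ∈ s, c i * L i w ^ 2) (u v : E) :
    L₀ u * L₀ v = ∑ i ∈ s, c i * (L i u * L i v) := by
  have hpolar : ∀ ℓ : F, ℓ (u + v) ^ 2 - ℓ (u - v) ^ 2 = 4 * (ℓ u * ℓ v) := fun ℓ => by
    rw [map_add, map_sub]; ring
  have hsum : ∑ i ∈ s, c i * L i (u + v) ^ 2 - ∑ i ∈ s, c i * L i (u - v) ^ 2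
      = 4 * ∑ i ∈ s, c i * (L i u * L i v) := by
    rw [← Finset.sum_sub_distrib, Finset.mul_sum]
    refine Finset.sum_congr rfl fun i _ => ?_
    rw [← mul_sub, hpolar]; ring
  have h4 : (4 : 𝕜) ≠ 0 := by
    rw [show (4 : 𝕜) = 2 * 2 by norm_num]; exact mul_ne_zero two_ne_zero two_ne_zero
  apply mul_left_cancel₀ h4
  rw [← hpolar, ← hsum, h, h]

end Polarization

theorem tendsto_mul_div_sq_of_even {𝕜 E : Type*} [NontriviallyNormedField 𝕜]
    [NormedAddCommGroup E] [NormedSpace 𝕜 E] {f : E → 𝕜} {x : E}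
    (hf : DifferentiableAt 𝕜 f x) (heven : ∀ z, f (-z) = f z) (hx : f x = 0) (w : E) :
    Tendsto (fun t : 𝕜 => f (t • w - x) * f (t • w + x) / t ^ 2) (𝓝[≠] 0)
      (𝓝 (-fderiv 𝕜 f x w ^ 2)) := by
  have hslope : ∀ v, Tendsto (fun t : 𝕜 => f (x + t • v) / t) (𝓝[≠] 0)
      (𝓝 (fderiv 𝕜 f x v)) := fun v => by
    simpa [hx, div_eq_inv_mul] using (hf.hasFDerivAt.hasLineDerivAt v).tendsto_slope_zero
  have hprod := (hslope (-w)).mul (hslope w)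
  rw [map_neg, neg_mul, ← sq] at hprod
  refine hprod.congr fun t => ?_
  rw [← heven (t • w - x), neg_sub, smul_neg, ← sub_eq_add_neg, add_comm x, div_mul_div_comm, sq]

theorem gradient_tensor_relation_general (g : ℕ) (r : ℕ)
    (f : (Fin g → ℂ) → ℂ) (hf : ContDiff ℂ 2 f)
    (heven : ∀ z, f (-z) = f z)
    (x₁ : Fin g → ℂ) (x : ℕ → Fin g → ℂ)
    (hx₁ : f x₁ = 0) (hx : ∀ k ∈ Finset.Icc 2 r, f (x k) = 0)
    (β : ℕ → ℂ)
    (hrel : ∀ z : Fin g → ℂ,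
      f (z - x₁) * f (z + x₁) = ∑ k ∈ Finset.Icc 2 r, β k * (f (z - x k) * f (z + x k))) :
    ∀ u v : Fin g → ℂ,
      (fderiv ℂ f x₁ u) * (fderiv ℂ f x₁ v) =
        ∑ k ∈ Finset.Icc 2 r, β k * ((fderiv ℂ f (x k) u) * (fderiv ℂ f (x k) v)) := by
  have hdiff : Differentiable ℂ f := hf.differentiable two_ne_zero
  refine mul_eq_sum_of_forall_sq_eq_sum fun w => ?_
  have hlim₁ := tendsto_mul_div_sq_of_even (hdiff x₁) heven hx₁ w
  have hlim : Tendsto (fun t : ℂ => f (t • w - x₁) * f (t • w + x₁) / t ^ 2) (𝓝[≠] 0)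
      (𝓝 (∑ k ∈ Finset.Icc 2 r, β k * -fderiv ℂ f (x k) w ^ 2)) := by
    simp_rw [hrel, Finset.sum_div]
    refine tendsto_finsetSum _ fun k hk => ?_
    simpa only [mul_div_assoc] using
      (tendsto_mul_div_sq_of_even (hdiff (x k)) heven (hx k hk) w).const_mul (β k)
  simpa only [mul_neg, Finset.sum_neg_distrib, neg_inj] using tendsto_nhds_unique hlim₁ hlim

/-- If `f` is `C²`, even, vanishes at `x₁, …, x_r`, and the sections
`s_{x_k}(z) = f(z-x_k)·f(z+x_k)` satisfy the linear relation
`s_{x₁} = ∑_{k=2}^r βₖ s_{x_k}`, then the rank-one gradient tensors satisfy the same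
relation: `Df(x₁)(u)·Df(x₁)(v) = ∑_{k=2}^r βₖ · Df(x_k)(u) · Df(x_k)(v)`. -/
theorem gradient_tensor_relation (g : ℕ) (hg : 1 ≤ g) (r : ℕ)
    (f : (Fin g → ℂ) → ℂ) (hf : ContDiff ℂ 2 f)
    (heven : ∀ z, f (-z) = f z)
    (x₁ : Fin g → ℂ) (x : ℕ → Fin g → ℂ)
    (hx₁ : f x₁ = 0) (hx : ∀ k ∈ Finset.Icc 2 r, f (x k) = 0)
    (β : ℕ → ℂ)
    (hrel : ∀ z : Fin g → ℂ,
      f (z - x₁) * f (z + x₁) = ∑ k ∈ Finset.Icc 2 r, β k * (f (z - x k) * f (z + x k))) :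
    ∀ u v : Fin g → ℂ,
      (fderiv ℂ f x₁ u) * (fderiv ℂ f x₁ v) =
        ∑ k ∈ Finset.Icc 2 r, β k * ((fderiv ℂ f (x k) u) * (fderiv ℂ f (x k) v)) :=
  gradient_tensor_relation_general g r f hf heven x₁ x hx₁ hx β hrel
end

section
/- Let $g \geq 1$, let $f : \mathbb{C}^g \to \mathbb{C}$ be twice continuously $\mathbb{C}$-differentiable and even, let $x_1, \dots, x_r \in \mathbb{C}^g$ satisfy $f(x_k) = 0$ for $k = 2, \dots, r$, and let $\beta_2, \dots, \beta_r \in \mathbb{C}$ all be nonzero such that for all $z \in \mathbb{C}^g$ one has $f(z-x_1) f(z+x_1) = \sum_{k=2}^{r} \beta_k\, f(z-x_k) f(z+x_k)$. Then $f(x_1) = 0$, and the linear functionals $Df(x_1), Df(x_2), \dots, Df(x_r)$ span a subspace of the dual space of $\mathbb{C}^g$ of dimension at most $\lfloor r/2 \rfloor$. -/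
/-!
Along the line `t ↦ t • h`, evenness turns `f (t • h - x)` into `f (x + t • (-h))`, so at a zero
`x` of `f` we get `f (t • h - x) * f (t • h + x) = -t² (Df(x) h)² + o(t²)`. Dividing the relation
by `t²` gives `(Df(x₁) h)² = ∑ βₖ (Df(xₖ) h)²` for all `h`. So the quadratic form `∑ cᵢ ℓᵢ²`,
with nonzero coefficients `c = (1, -β₂, …, -β_r)` and `ℓ = (Df(x₁), …, Df(x_r))`, vanishes.
By polarization the image of `u ↦ (ℓᵢ u)ᵢ` is totally isotropic for the nondegenerate diagonal
form `∑ cᵢ aᵢ bᵢ` on `ℂ^r`, hence has dimension at most `r / 2`; and that dimension is the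
dimension of the span of the `ℓᵢ`.
-/

open Module Filter Topology

theorem Function.Even.eq_zero_of_mul_eq_sum {E R ι : Type*} [AddGroup E] [Semiring R]
    [NoZeroDivisors R] {f : E → R} (hf : Function.Even f) {x₀ : E} {x : ι → E} {β : ι → R}
    {s : Finset ι} (hx : ∀ k ∈ s, f (x k) = 0)
    (hrel : ∀ z, f (z - x₀) * f (z + x₀) = ∑ k ∈ s, β k * (f (z - x k) * f (z + x k))) :
    f x₀ = 0 := by
  have h := hrel 0
  simp only [zero_sub, zero_add] at h
  rw [hf x₀, Finset.sum_eq_zero fun k hk => by rw [hf (x k), hx k hk, mul_zero, mul_zero]] at h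
  exact mul_self_eq_zero.mp h

section Analysis

variable {𝕜 E : Type*} [NontriviallyNormedField 𝕜] [NormedAddCommGroup E] [NormedSpace 𝕜 E]

theorem Function.Even.tendsto_mul_div_sq {f : E → 𝕜} (hf : Function.Even f) {p : E}
    (hd : DifferentiableAt 𝕜 f p) (hp : f p = 0) (h : E) :
    Tendsto (fun t : 𝕜 => f (t • h - p) * f (t • h + p) / t ^ 2) (𝓝[≠] 0)
      (𝓝 (-fderiv 𝕜 f p h ^ 2)) := by
  have slope (v : E) : Tendsto (fun t : 𝕜 => t⁻¹ * f (p + t • v)) (𝓝[≠] 0)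
      (𝓝 (fderiv 𝕜 f p v)) := by
    simpa [hp] using (hd.hasFDerivAt.hasLineDerivAt v).tendsto_slope_zero
  have := (slope (-h)).mul (slope h)
  rw [map_neg, neg_mul, ← sq] at this
  refine this.congr fun t => ?_
  rw [← hf (t • h - p), neg_sub, smul_neg, ← sub_eq_add_neg, add_comm p]
  ring

theorem Function.Even.sq_fderiv_eq_sum_of_mul_eq_sum {ι : Type*} {f : E → 𝕜}
    (hf : Function.Even f) {x₀ : E} {x : ι → E} {β : ι → 𝕜} {s : Finset ι}
    (hd₀ : DifferentiableAt 𝕜 f x₀) (hd : ∀ k ∈ s, DifferentiableAt 𝕜 f (x k))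
    (h₀ : f x₀ = 0) (hx : ∀ k ∈ s, f (x k) = 0)
    (hrel : ∀ z, f (z - x₀) * f (z + x₀) = ∑ k ∈ s, β k * (f (z - x k) * f (z + x k)))
    (h : E) :
    fderiv 𝕜 f x₀ h ^ 2 = ∑ k ∈ s, β k * fderiv 𝕜 f (x k) h ^ 2 := by
  have lim_rhs : Tendsto (fun t : 𝕜 => f (t • h - x₀) * f (t • h + x₀) / t ^ 2) (𝓝[≠] 0)
      (𝓝 (∑ k ∈ s, β k * -fderiv 𝕜 f (x k) h ^ 2)) := by
    refine (tendsto_finsetSum s fun k hk =>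
      (hf.tendsto_mul_div_sq (hd k hk) (hx k hk) h).const_mul (β k)).congr fun t => ?_
    rw [hrel, Finset.sum_div]
    exact Finset.sum_congr rfl fun k _ => (mul_div_assoc _ _ _).symm
  have := tendsto_nhds_unique (hf.tendsto_mul_div_sq hd₀ h₀ h) lim_rhs
  simpa [Finset.sum_neg_distrib] using this

end Analysis

section LinearAlgebra

variable {K V ι : Type*} [Field K] [AddCommGroup V] [Module K V]

theorem sum_mul_mul_eq_zero_of_sum_mul_sq_eq_zero [Fintype ι] [NeZero (2 : K)]
    {ℓ : ι → Dual K V} {c : ι → K} (h : ∀ u, ∑ i, c i * ℓ i u ^ 2 = 0) (u v : V) :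
    ∑ i, c i * (ℓ i u * ℓ i v) = 0 := by
  have huv := h (u + v)
  simp only [map_add, add_sq, mul_add, Finset.sum_add_distrib, h u, h v] at huv
  have h2 : 2 * ∑ i, c i * (ℓ i u * ℓ i v) = 0 := by
    rw [← huv, Finset.mul_sum, zero_add, add_zero]
    exact Finset.sum_congr rfl fun i _ => by ring
  exact (mul_eq_zero.mp h2).resolve_left two_ne_zero

theorem LinearMap.BilinForm.finrank_le_half_of_le_orthogonal [FiniteDimensional K V]
    {B : LinearMap.BilinForm K V} (hB : B.Nondegenerate) {W : Submodule K V}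
    (hW : W ≤ B.orthogonal W) : finrank K W ≤ finrank K V / 2 := by
  have := Submodule.finrank_mono hW
  have := Submodule.finrank_le W
  rw [LinearMap.BilinForm.finrank_orthogonal hB] at *
  omega

theorem finrank_span_range_eq_finrank_range_pi [FiniteDimensional K V] (ℓ : ι → Dual K V) :
    finrank K (Submodule.span K (Set.range ℓ)) =
      finrank K (LinearMap.range (LinearMap.pi ℓ)) := by
  have hker : (Submodule.span K (Set.range ℓ)).dualCoannihilator =
      LinearMap.ker (LinearMap.pi ℓ) := by
    ext v
    rw [← SetLike.mem_coe, Submodule.coe_dualCoannihilator_span]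
    simp [funext_iff]
  have h₁ := Subspace.finrank_add_finrank_dualCoannihilator_eq (Submodule.span K (Set.range ℓ))
  have h₂ := LinearMap.finrank_range_add_finrank_ker (LinearMap.pi ℓ)
  rw [hker] at h₁
  omega

theorem finrank_span_range_le_half_of_sum_mul_sq_eq_zero [FiniteDimensional K V] [Fintype ι]
    [NeZero (2 : K)] {ℓ : ι → Dual K V} {c : ι → K} (hc : ∀ i, c i ≠ 0)
    (h : ∀ u, ∑ i, c i * ℓ i u ^ 2 = 0) :
    finrank K (Submodule.span K (Set.range ℓ)) ≤ Fintype.card ι / 2 := by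
  classical
  set B := (Matrix.diagonal c).toBilin'
  have hB : B.Nondegenerate := Matrix.nondegenerate_toBilin'_iff.mpr
    (Matrix.nondegenerate_of_det_ne_zero
      (by simp [Matrix.det_diagonal, Finset.prod_ne_zero_iff, hc]))
  have hiso : LinearMap.range (LinearMap.pi ℓ) ≤
      B.orthogonal (LinearMap.range (LinearMap.pi ℓ)) := by
    rintro _ ⟨u, rfl⟩ _ ⟨v, rfl⟩
    simpa [B, LinearMap.BilinForm.mem_orthogonal_iff, Matrix.toBilin'_apply', dotProduct,
      Matrix.mulVec_diagonal, mul_left_comm] using sum_mul_mul_eq_zero_of_sum_mul_sq_eq_zero h v u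
  rw [finrank_span_range_eq_finrank_range_pi]
  simpa using B.finrank_le_half_of_le_orthogonal hB hiso

theorem finrank_span_insert_image_le_of_sq_eq_sum [FiniteDimensional K V] [NeZero (2 : K)]
    {ℓ₀ : Dual K V} {ℓ : ι → Dual K V} {β : ι → K} {s : Finset ι} (hβ : ∀ k ∈ s, β k ≠ 0)
    (h : ∀ u, ℓ₀ u ^ 2 = ∑ k ∈ s, β k * ℓ k u ^ 2) :
    finrank K (Submodule.span K (insert ℓ₀ (ℓ '' s))) ≤ (s.card + 1) / 2 := by
  set L : Option s → Dual K V := fun i => i.elim ℓ₀ fun k => ℓ k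
  have hL : Set.range L = insert ℓ₀ (ℓ '' s) := by
    rw [Option.range_eq, Set.image_eq_range]
    rfl
  have hc : ∀ i : Option s, i.elim 1 (fun k => -β k) ≠ 0 := by
    rintro (_ | ⟨k, hk⟩)
    · exact one_ne_zero
    · simpa using hβ k hk
  have hsum (u : V) : ∑ i, i.elim 1 (fun k => -β k) * L i u ^ 2 = 0 := by
    simp [L, Fintype.sum_option, h u, Finset.sum_attach s fun k => β k * ℓ k u ^ 2]
  have := finrank_span_range_le_half_of_sum_mul_sq_eq_zero hc hsum
  rwa [hL, Fintype.card_option, Fintype.card_coe] at this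

end LinearAlgebra

theorem ContinuousLinearMap.finrank_span_image_coeLM {K E F : Type*} [Field K]
    [TopologicalSpace E] [AddCommGroup E] [Module K E] [TopologicalSpace F] [AddCommGroup F]
    [Module K F] [IsTopologicalAddGroup F] [ContinuousConstSMul K F] (S : Set (E →L[K] F)) :
    finrank K (Submodule.span K (coeLM K '' S)) = finrank K (Submodule.span K S) := by
  rw [← Submodule.map_span]
  exact (Submodule.equivMapOfInjective _ coe_injective _).finrank_eq.symm

theorem gauss_images_span_le_general (g : ℕ) (r : ℕ)
    (f : (Fin g → ℂ) → ℂ) (hf : ContDiff ℂ 2 f)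
    (heven : ∀ z, f (-z) = f z)
    (x₁ : Fin g → ℂ) (x : ℕ → Fin g → ℂ)
    (hx : ∀ k ∈ Finset.Icc 2 r, f (x k) = 0)
    (β : ℕ → ℂ) (hβ : ∀ k ∈ Finset.Icc 2 r, β k ≠ 0)
    (hrel : ∀ z : Fin g → ℂ,
      f (z - x₁) * f (z + x₁) = ∑ k ∈ Finset.Icc 2 r, β k * (f (z - x k) * f (z + x k))) :
    f x₁ = 0 ∧
      Module.finrank ℂ
        ↥(Submodule.span ℂ
          (insert (fderiv ℂ f x₁)
            ((fun k => fderiv ℂ f (x k)) '' ↑(Finset.Icc 2 r)))) ≤ r / 2 := by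
  have hd : Differentiable ℂ f := hf.differentiable (by norm_num)
  have h₀ : f x₁ = 0 := Function.Even.eq_zero_of_mul_eq_sum heven hx hrel
  refine ⟨h₀, ?_⟩
  have hsq := Function.Even.sq_fderiv_eq_sum_of_mul_eq_sum heven (hd x₁) (fun k _ => hd (x k))
    h₀ hx hrel
  have := finrank_span_insert_image_le_of_sq_eq_sum
    (ℓ₀ := ContinuousLinearMap.coeLM ℂ (fderiv ℂ f x₁))
    (ℓ := fun k => ContinuousLinearMap.coeLM ℂ (fderiv ℂ f (x k))) hβ hsq
  rw [← Set.image_image (ContinuousLinearMap.coeLM ℂ), ← Set.image_insert_eq,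
    ContinuousLinearMap.finrank_span_image_coeLM, Nat.card_Icc] at this
  omega

/-- Analytic content of Proposition 2.1: if `f` is `C²`, even, vanishes at `x₂, …, x_r`,
the `βₖ` are nonzero, and the sections `s_{x_k}(z) = f(z-x_k)·f(z+x_k)` satisfy
`s_{x₁} = ∑_{k=2}^r βₖ s_{x_k}`, then `f x₁ = 0` and the differentials
`Df(x₁), Df(x₂), …, Df(x_r)` span a subspace of the dual of `ℂ^g` of dimension at
most `⌊r/2⌋`. -/
theorem gauss_images_span_le (g : ℕ) (hg : 1 ≤ g) (r : ℕ)
    (f : (Fin g → ℂ) → ℂ) (hf : ContDiff ℂ 2 f)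
    (heven : ∀ z, f (-z) = f z)
    (x₁ : Fin g → ℂ) (x : ℕ → Fin g → ℂ)
    (hx : ∀ k ∈ Finset.Icc 2 r, f (x k) = 0)
    (β : ℕ → ℂ) (hβ : ∀ k ∈ Finset.Icc 2 r, β k ≠ 0)
    (hrel : ∀ z : Fin g → ℂ,
      f (z - x₁) * f (z + x₁) = ∑ k ∈ Finset.Icc 2 r, β k * (f (z - x k) * f (z + x k))) :
    f x₁ = 0 ∧
      Module.finrank ℂ
        ↥(Submodule.span ℂ
          (insert (fderiv ℂ f x₁)
            ((fun k => fderiv ℂ f (x k)) '' ↑(Finset.Icc 2 r)))) ≤ r / 2 :=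
  gauss_images_span_le_general g r f hf heven x₁ x hx β hβ hrel
end

section
/- Let $g \geq 1$, let $f : \mathbb{C}^g \to \mathbb{C}$ be twice continuously $\mathbb{C}$-differentiable and even, let $x_1, \dots, x_r \in \mathbb{C}^g$ satisfy $f(x_k) = 0$ and $Df(x_k) = 0$ for all $k = 2, \dots, r$, and let $\beta_2, \dots, \beta_r \in \mathbb{C}$ be such that for all $z \in \mathbb{C}^g$ one has $f(z-x_1) f(z+x_1) = \sum_{k=2}^{r} \beta_k\, f(z-x_k) f(z+x_k)$. Then $f(x_1) = 0$ and $Df(x_1) = 0$. -/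
/-! Setting `z = 0` in the relation gives `f x₁ ^ 2 = 0`. For the differential, restrict to
a line `t ↦ t • u` through the origin. If `f x = 0`, evenness gives
`f (t • u - x) * f (t • u + x) = f (x - t • u) * f (x + t • u)`, and dividing by `t²` this
tends to `-(Df(x) u)²` as `t → 0`. For the singular points `x₂, …, x_r` that limit is `0`, so
dividing the relation by `t²` and letting `t → 0` gives `(Df(x₁) u)² = 0`. -/

open Filter Topology

section LineSlopes

variable {𝕜 E : Type*} [NontriviallyNormedField 𝕜] [NormedAddCommGroup E] [NormedSpace 𝕜 E]
  {f : E → 𝕜} {x : E}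

theorem HasFDerivAt.tendsto_inv_mul_apply_add_smul {f' : E →L[𝕜] 𝕜} (hf : HasFDerivAt f f' x)
    (hx : f x = 0) (v : E) :
    Tendsto (fun t : 𝕜 => t⁻¹ * f (x + t • v)) (𝓝[≠] 0) (𝓝 (f' v)) := by
  have hline : HasDerivAt (fun t : 𝕜 => f (x + t • v)) (f' v) 0 := by
    have := ((hasDerivAt_id (0 : 𝕜)).smul_const v).const_add x
    simp only [id, one_smul] at this
    exact (by simpa using hf : HasFDerivAt f f' (x + (0 : 𝕜) • v)).comp_hasDerivAt 0 this
  simpa [hx] using hline.tendsto_slope_zero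

theorem tendsto_inv_sq_mul_apply_sub_mul_apply_add_of_even (heven : ∀ z, f (-z) = f z)
    (hf : DifferentiableAt 𝕜 f x) (hx : f x = 0) (u : E) :
    Tendsto (fun t : 𝕜 => (t ^ 2)⁻¹ * (f (t • u - x) * f (t • u + x))) (𝓝[≠] 0)
      (𝓝 (-fderiv 𝕜 f x u ^ 2)) := by
  have hminus := hf.hasFDerivAt.tendsto_inv_mul_apply_add_smul hx (-u)
  have hplus := hf.hasFDerivAt.tendsto_inv_mul_apply_add_smul hx u
  have hsplit : ∀ t : 𝕜, (t ^ 2)⁻¹ * (f (t • u - x) * f (t • u + x))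
      = t⁻¹ * f (x + t • -u) * (t⁻¹ * f (x + t • u)) := by
    intro t
    rw [← heven (t • u - x), smul_neg, neg_sub, sub_eq_add_neg, add_comm (t • u) x]
    ring
  simp only [hsplit]
  simpa [sq] using hminus.mul hplus

end LineSlopes

theorem singular_point_propagates_general (g : ℕ) (r : ℕ)
    (f : (Fin g → ℂ) → ℂ) (hf : ContDiff ℂ 2 f)
    (heven : ∀ z, f (-z) = f z)
    (x₁ : Fin g → ℂ) (x : ℕ → Fin g → ℂ)
    (hx : ∀ k ∈ Finset.Icc 2 r, f (x k) = 0)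
    (hdx : ∀ k ∈ Finset.Icc 2 r, fderiv ℂ f (x k) = 0)
    (β : ℕ → ℂ)
    (hrel : ∀ z : Fin g → ℂ,
      f (z - x₁) * f (z + x₁) = ∑ k ∈ Finset.Icc 2 r, β k * (f (z - x k) * f (z + x k))) :
    f x₁ = 0 ∧ fderiv ℂ f x₁ = 0 := by
  have hdiff : Differentiable ℂ f := hf.differentiable (by norm_num)
  have hval : f x₁ = 0 := by
    have h0 := hrel 0
    rw [Finset.sum_eq_zero fun k hk => by
        rw [zero_sub, heven, zero_add, hx k hk, mul_zero, mul_zero], zero_sub, heven, zero_add] at h0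
    exact mul_self_eq_zero.mp h0
  refine ⟨hval, ContinuousLinearMap.ext fun u => ?_⟩
  have hlhs := tendsto_inv_sq_mul_apply_sub_mul_apply_add_of_even heven (hdiff x₁) hval u
  have hrhs : Tendsto (fun t : ℂ => ∑ k ∈ Finset.Icc 2 r,
      β k * ((t ^ 2)⁻¹ * (f (t • u - x k) * f (t • u + x k)))) (𝓝[≠] 0) (𝓝 0) := by
    rw [← Finset.sum_const_zero (s := Finset.Icc 2 r)]
    refine tendsto_finsetSum _ fun k hk => ?_
    simpa [hdx k hk] using (tendsto_inv_sq_mul_apply_sub_mul_apply_add_of_even heven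
      (hdiff (x k)) (hx k hk) u).const_mul (β k)
  have hsq : -fderiv ℂ f x₁ u ^ 2 = 0 := by
    refine tendsto_nhds_unique hlhs (hrhs.congr fun t => ?_)
    rw [hrel, Finset.mul_sum]
    exact Finset.sum_congr rfl fun k _ => by ring
  simpa using hsq

/-- If `f` is `C²`, even, and `x₂, …, x_r` are "singular" zeros of `f` (both `f` and its
differential vanish there), and the sections `s_{x_k}(z) = f(z-x_k)·f(z+x_k)` satisfy
`s_{x₁} = ∑_{k=2}^r βₖ s_{x_k}`, then `x₁` is also a singular zero of `f`. -/
theorem singular_point_propagates (g : ℕ) (hg : 1 ≤ g) (r : ℕ)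
    (f : (Fin g → ℂ) → ℂ) (hf : ContDiff ℂ 2 f)
    (heven : ∀ z, f (-z) = f z)
    (x₁ : Fin g → ℂ) (x : ℕ → Fin g → ℂ)
    (hx : ∀ k ∈ Finset.Icc 2 r, f (x k) = 0)
    (hdx : ∀ k ∈ Finset.Icc 2 r, fderiv ℂ f (x k) = 0)
    (β : ℕ → ℂ)
    (hrel : ∀ z : Fin g → ℂ,
      f (z - x₁) * f (z + x₁) = ∑ k ∈ Finset.Icc 2 r, β k * (f (z - x k) * f (z + x k))) :
    f x₁ = 0 ∧ fderiv ℂ f x₁ = 0 :=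
  singular_point_propagates_general g r f hf heven x₁ x hx hdx β hrel
end

section
/- Let $g \geq 1$, let $f : \mathbb{C}^g \to \mathbb{C}$ be three times continuously $\mathbb{C}$-differentiable and even, let $x_1, x_2 \in \mathbb{C}^g$ satisfy $f(x_1) = f(x_2) = 0$, and suppose there exists $\gamma \in \mathbb{C}$ with $Df(x_1) = \gamma\, Df(x_2)$ as linear functionals on $\mathbb{C}^g$. Define $h : \mathbb{C}^g \to \mathbb{C}$ by $h(z) = f(z-x_1) f(z+x_1) - \gamma^2\, f(z-x_2) f(z+x_2)$. Then $h$ vanishes to order at least $4$ at the origin: $h(0) = 0$ and the $k$-th (iterated Fréchet) derivative of $h$ at $0$ is zero for $k = 1, 2, 3$. -/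
/-!
Each section `s_a(z) = f(z - a) f(z + a)` is even in `z` when `f` is, so `h` is even and its
derivatives of odd order vanish at the origin. Since `f(±a) = 0` for `a = x₁, x₂`, the value
`h 0` vanishes and only the cross terms survive in the Hessian of `s_a` at `0`; with
`Df(-a) = -Df(a)` it equals `-2 Df(a) ⊗ Df(a)`, so `Df(x₁) = γ Df(x₂)` makes the Hessians of
`s_{x₁}` and `γ² s_{x₂}` cancel.
-/

open Set

variable {𝕜 : Type*} [NontriviallyNormedField 𝕜] {E F : Type*} [NormedAddCommGroup E]
  [NormedSpace 𝕜 E] [NormedAddCommGroup F] [NormedSpace 𝕜 F]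

namespace Function.Even

theorem iteratedFDeriv_neg {f : E → F} (hf : f.Even) (n : ℕ) (x : E) :
    iteratedFDeriv 𝕜 n f (-x) = (-1 : 𝕜) ^ n • iteratedFDeriv 𝕜 n f x := by
  have hcomp : f ∘ ContinuousLinearEquiv.neg 𝕜 = f := funext hf
  have hcomp_neg := (ContinuousLinearEquiv.neg 𝕜 (M := E)).iteratedFDerivWithin_comp_right f
    uniqueDiffOn_univ (mem_univ (-x)) n
  rw [preimage_univ, iteratedFDerivWithin_univ, iteratedFDerivWithin_univ, hcomp] at hcomp_neg
  ext m
  have hneg : (fun i => -m i) = fun i => (-1 : 𝕜) • m i := by simp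
  simp [hcomp_neg, hneg, ContinuousMultilinearMap.map_smul_univ, smul_smul, ← mul_pow]

theorem iteratedFDeriv_zero_eq_zero_of_odd [CharZero 𝕜] {f : E → F} (hf : f.Even) {n : ℕ}
    (hn : Odd n) : iteratedFDeriv 𝕜 n f 0 = 0 := by
  have h := hf.iteratedFDeriv_neg (𝕜 := 𝕜) n 0
  rw [neg_zero, hn.neg_one_pow, neg_one_smul] at h
  have h2 : (2 : 𝕜) • iteratedFDeriv 𝕜 n f 0 = 0 := by
    rw [two_smul]
    nth_rewrite 1 [h]
    exact neg_add_cancel _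
  exact (smul_eq_zero.mp h2).resolve_left two_ne_zero

theorem fderiv_neg {f : E → F} (hf : f.Even) (x : E) :
    fderiv 𝕜 f (-x) = -fderiv 𝕜 f x := by
  have hcomp : f ∘ ContinuousLinearEquiv.neg 𝕜 = f := funext hf
  have hcomp_neg := (ContinuousLinearEquiv.neg 𝕜 (M := E)).comp_right_fderiv (f := f) (x := x)
  rw [hcomp] at hcomp_neg
  ext v
  simp [hcomp_neg]

end Function.Even

theorem fderiv_fderiv_mul_apply_of_eq_zero {u w : E → 𝕜} (hu : ContDiff 𝕜 2 u)
    (hw : ContDiff 𝕜 2 w) {x : E} (hux : u x = 0) (hwx : w x = 0) (v₀ v₁ : E) :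
    fderiv 𝕜 (fderiv 𝕜 fun z => u z * w z) x v₀ v₁ =
      fderiv 𝕜 u x v₀ * fderiv 𝕜 w x v₁ + fderiv 𝕜 w x v₀ * fderiv 𝕜 u x v₁ := by
  have hu1 : Differentiable 𝕜 u := hu.differentiable (by norm_num)
  have hw1 : Differentiable 𝕜 w := hw.differentiable (by norm_num)
  have hu2 : Differentiable 𝕜 (fderiv 𝕜 u) :=
    (hu.fderiv_right le_rfl).differentiable one_ne_zero
  have hw2 : Differentiable 𝕜 (fderiv 𝕜 w) :=
    (hw.fderiv_right le_rfl).differentiable one_ne_zero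
  have hD : fderiv 𝕜 (fun z => u z * w z) =
      fun z => u z • fderiv 𝕜 w z + w z • fderiv 𝕜 u z :=
    funext fun z => fderiv_mul (hu1 z) (hw1 z)
  have hD2 : HasFDerivAt (fun z => u z • fderiv 𝕜 w z + w z • fderiv 𝕜 u z) _ x :=
    ((hu1 x).hasFDerivAt.smul (hw2 x).hasFDerivAt).add
      ((hw1 x).hasFDerivAt.smul (hu2 x).hasFDerivAt)
  rw [hD, hD2.fderiv]
  simp [hux, hwx]

section

variable {G R : Type*} [AddCommGroup G] [CommMonoidWithZero R]

/-- The paper's section `s_a(z) = f(z - a) f(z + a)`. -/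
def translateProduct (f : G → R) (a z : G) : R := f (z - a) * f (z + a)

theorem translateProduct_even {f : G → R} (hf : f.Even) (a : G) :
    (translateProduct f a).Even := fun z => by
  rw [translateProduct, translateProduct, ← hf (-z - a), ← hf (-z + a)]
  simp only [neg_sub', neg_neg, neg_add', sub_neg_eq_add]
  exact mul_comm _ _

theorem translateProduct_apply_zero {f : G → R} {a : G} (ha : f a = 0) :
    translateProduct f a 0 = 0 := by
  simp [translateProduct, ha]

end

theorem ContDiff.translateProduct {f : E → 𝕜} {n : WithTop ℕ∞} (hf : ContDiff 𝕜 n f) (a : E) :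
    ContDiff 𝕜 n (translateProduct f a) := by
  unfold _root_.translateProduct
  fun_prop

theorem iteratedFDeriv_two_translateProduct_zero_apply {f : E → 𝕜} (hf : f.Even)
    (hfc : ContDiff 𝕜 2 f) {a : E} (ha : f a = 0) (v : Fin 2 → E) :
    iteratedFDeriv 𝕜 2 (translateProduct f a) 0 v =
      -2 * (fderiv 𝕜 f a (v 0) * fderiv 𝕜 f a (v 1)) := by
  have hsub : ContDiff 𝕜 2 fun z => f (z - a) := by fun_prop
  have hadd : ContDiff 𝕜 2 fun z => f (z + a) := by fun_prop
  rw [iteratedFDeriv_two_apply]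
  unfold translateProduct
  rw [fderiv_fderiv_mul_apply_of_eq_zero hsub hadd (by simpa [hf a]) (by simpa),
    fderiv_comp_sub, fderiv_comp_add_right, zero_sub, zero_add, hf.fderiv_neg]
  simp only [neg_apply]
  ring

theorem section_combination_vanishes_to_order_four_general (g : ℕ)
    (f : (Fin g → ℂ) → ℂ) (hf : ContDiff ℂ 3 f)
    (heven : ∀ z, f (-z) = f z)
    (x₁ x₂ : Fin g → ℂ) (hx₁ : f x₁ = 0) (hx₂ : f x₂ = 0)
    (γ : ℂ) (hγ : fderiv ℂ f x₁ = γ • fderiv ℂ f x₂)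
    (h : (Fin g → ℂ) → ℂ)
    (hh : ∀ z, h z = f (z - x₁) * f (z + x₁) - γ ^ 2 * (f (z - x₂) * f (z + x₂))) :
    h 0 = 0 ∧ iteratedFDeriv ℂ 1 h 0 = 0 ∧ iteratedFDeriv ℂ 2 h 0 = 0 ∧
      iteratedFDeriv ℂ 3 h 0 = 0 := by
  obtain rfl : h = translateProduct f x₁ - γ ^ 2 • translateProduct f x₂ :=
    funext fun z => by simp [hh, translateProduct]
  have h_even : Function.Even (translateProduct f x₁ - γ ^ 2 • translateProduct f x₂) :=
    fun z => by simp [translateProduct_even heven x₁ z, translateProduct_even heven x₂ z]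
  refine ⟨by simp [translateProduct_apply_zero hx₁, translateProduct_apply_zero hx₂],
    h_even.iteratedFDeriv_zero_eq_zero_of_odd odd_one, ?_,
    h_even.iteratedFDeriv_zero_eq_zero_of_odd (by decide)⟩
  have hf2 : ContDiff ℂ 2 f := hf.of_le (by norm_num)
  have hs₂ : ContDiff ℂ 2 (γ ^ 2 • translateProduct f x₂) :=
    (hf2.translateProduct x₂).const_smul (γ ^ 2)
  ext v
  rw [iteratedFDeriv_sub_apply (hf2.translateProduct x₁).contDiffAt hs₂.contDiffAt,
    iteratedFDeriv_const_smul_apply (hf2.translateProduct x₂).contDiffAt]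
  simp only [sub_apply, smul_apply, iteratedFDeriv_two_translateProduct_zero_apply heven hf2 hx₁,
    iteratedFDeriv_two_translateProduct_zero_apply heven hf2 hx₂, hγ, smul_eq_mul, zero_apply]
  ring

/-- Analytic content of the Lemma in Section 6: if `f` is `C³`, even, `f x₁ = f x₂ = 0`
and `Df(x₁) = γ • Df(x₂)`, then
`h(z) = f(z-x₁)f(z+x₁) - γ² · f(z-x₂)f(z+x₂)` vanishes to order at least 4 at the
origin. -/
theorem section_combination_vanishes_to_order_four (g : ℕ) (hg : 1 ≤ g)
    (f : (Fin g → ℂ) → ℂ) (hf : ContDiff ℂ 3 f)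
    (heven : ∀ z, f (-z) = f z)
    (x₁ x₂ : Fin g → ℂ) (hx₁ : f x₁ = 0) (hx₂ : f x₂ = 0)
    (γ : ℂ) (hγ : fderiv ℂ f x₁ = γ • fderiv ℂ f x₂)
    (h : (Fin g → ℂ) → ℂ)
    (hh : ∀ z, h z = f (z - x₁) * f (z + x₁) - γ ^ 2 * (f (z - x₂) * f (z + x₂))) :
    h 0 = 0 ∧ iteratedFDeriv ℂ 1 h 0 = 0 ∧ iteratedFDeriv ℂ 2 h 0 = 0 ∧
      iteratedFDeriv ℂ 3 h 0 = 0 :=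
  section_combination_vanishes_to_order_four_general g f hf heven x₁ x₂ hx₁ hx₂ γ hγ h hh
end
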